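/- Let C be a left H-category and let N be a right (C#H)-module. The functor L_{Mod-C}(N,−) : Mod-(C#H) → H-mod, P ↦ Hom_{Mod-C}(N,P)^{(H)}, is right adjoint to the functor (−)⊗N : H-mod → Mod-(C#H); that is, there are natural isomorphisms Hom_{Mod-(C#H)}(M ⊗ N, P) ≅ Hom_{H-mod}(M, L_{Mod-C}(N,P)) for all right (C#H)-modules P and all H-locally finite left H-modules M. -/

import Mathlib

open CategoryTheory TensorProduct
noncomputable section

structure LinCat (K : Type) [Field K] where
  Obj : Type
  Hom : Obj → Obj → Type
  [addHom : ∀ X Y, AddCommGroup (Hom X Y)]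
  [modHom : ∀ X Y, Module K (Hom X Y)]
  idm : ∀ X, Hom X X
  comp : ∀ {X Y Z : Obj}, Hom X Y →ₗ[K] Hom Y Z →ₗ[K] Hom X Z
  id_comp : ∀ {X Y : Obj} (f : Hom X Y), comp (idm X) f = f
  comp_id : ∀ {X Y : Obj} (f : Hom X Y), comp f (idm Y) = f
  assoc : ∀ {W X Y Z : Obj} (f : Hom W X) (g : Hom X Y) (h : Hom Y Z),
    comp (comp f g) h = comp f (comp g h)

attribute [instance] LinCat.addHom LinCat.modHom

variable (K : Type) [Field K] (H : Type) [Ring H] [HopfAlgebra K H]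

structure RMod (D : LinCat K) where
  ob : D.Obj → Type
  [addOb : ∀ X, AddCommGroup (ob X)]
  [modOb : ∀ X, Module K (ob X)]
  map : ∀ {X Y : D.Obj}, D.Hom X Y →ₗ[K] (ob Y →ₗ[K] ob X)
  map_id : ∀ X, map (D.idm X) = LinearMap.id
  map_comp : ∀ {X Y Z : D.Obj} (f : D.Hom X Y) (g : D.Hom Y Z),
    map (D.comp f g) = (map f) ∘ₗ (map g)

attribute [instance] RMod.addOb RMod.modOb

@[ext] structure RModHom {D : LinCat K} (M N : RMod K D) where
  app : ∀ X, M.ob X →ₗ[K] N.ob X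
  natural : ∀ {X Y : D.Obj} (f : D.Hom X Y) (m : M.ob Y),
    app X (M.map f m) = N.map f (app Y m)

instance RMod.instCategory (D : LinCat K) : Category (RMod K D) where
  Hom M N := RModHom K M N
  id M := ⟨fun _ => LinearMap.id, by intros; rfl⟩
  comp η θ := ⟨fun X => (θ.app X).comp (η.app X), by
    intro X Y f m
    simp only [LinearMap.comp_apply, η.natural, θ.natural]⟩
  id_comp := by intros; rfl
  comp_id := by intros; rfl
  assoc := by intros; rfl

namespace RModHom

variable {K H} {D : LinCat K} {M N : RMod K D}

instance : Zero (RModHom K M N) :=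
  ⟨⟨fun _ => 0, by intros; simp⟩⟩

instance : Add (RModHom K M N) :=
  ⟨fun η ν => ⟨fun X => η.app X + ν.app X, by
    intro X Y f m
    simp [η.natural, ν.natural]⟩⟩

instance : Neg (RModHom K M N) :=
  ⟨fun η => ⟨fun X => -η.app X, by
    intro X Y f m
    simp [η.natural]⟩⟩

instance : Sub (RModHom K M N) :=
  ⟨fun η ν => ⟨fun X => η.app X - ν.app X, by
    intro X Y f m
    simp [η.natural, ν.natural]⟩⟩

instance : SMul K (RModHom K M N) :=
  ⟨fun k η => ⟨fun X => k • η.app X, by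
    intro X Y f m
    simp [η.natural]⟩⟩

instance : SMul ℕ (RModHom K M N) :=
  ⟨fun n η => ⟨fun X => n • η.app X, by
    intro X Y f m
    simp [η.natural]⟩⟩

instance : SMul ℤ (RModHom K M N) :=
  ⟨fun n η => ⟨fun X => n • η.app X, by
    intro X Y f m
    simp [η.natural]⟩⟩

theorem app_injective :
    Function.Injective (fun (η : RModHom K M N) => η.app) := by
  intro η ν h; ext X m; exact congrFun (congrArg (fun u => (u X : M.ob X → N.ob X)) h) m

instance : AddCommGroup (RModHom K M N) :=
  Function.Injective.addCommGroup (fun η => η.app) app_injective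
    rfl (fun _ _ => rfl) (fun _ => rfl) (fun _ _ => rfl) (fun _ _ => rfl) (fun _ _ => rfl)

instance : Module K (RModHom K M N) :=
  Function.Injective.module K
    ⟨⟨fun η => η.app, rfl⟩, fun _ _ => rfl⟩ app_injective (fun _ _ => rfl)

@[simp] theorem add_app (η ν : RModHom K M N) (X : D.Obj) :
    (η + ν).app X = η.app X + ν.app X := rfl

@[simp] theorem smul_app (k : K) (η : RModHom K M N) (X : D.Obj) :
    (k • η).app X = k • η.app X := rfl

@[simp] theorem zero_app (X : D.Obj) : (0 : RModHom K M N).app X = 0 := rfl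

end RModHom


section PART3
variable (K : Type) [Field K] (H : Type) [Ring H] [HopfAlgebra K H]

structure LeftHCat extends LinCat K where
  act : ∀ X Y, H →ₗ[K] Hom X Y →ₗ[K] Hom X Y
  act_one : ∀ X Y, act X Y 1 = LinearMap.id
  act_mul : ∀ X Y (a b : H), act X Y (a * b) = (act X Y a) ∘ₗ (act X Y b)
  act_idm : ∀ (X : Obj) (h : H),
    act X X h (idm X) = Coalgebra.counit (R := K) h • idm X
  act_comp : ∀ {X Y Z : Obj} (h : H) (u : Hom X Y) (v : Hom Y Z),
    act X Z h (comp u v) =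
      TensorProduct.lift (comp (X := X) (Y := Y) (Z := Z)).flip
        (TensorProduct.map ((act Y Z).flip v) ((act X Y).flip u)
          (Coalgebra.comul (R := K) h))

variable {K H}

/-- The smash product category `C # H`: it has the same objects as `C` and
`Hom (X, Y) = Hom_C(X, Y) ⊗ H`, with composition
`(g # h') ≫ (f # h) = ∑ ((h₁ g) ≫ f) # (h₂ * h')` (i.e. `(f#h)∘(g#h') = ∑ f∘(h₁g) # h₂h'`).
Since the composition is uniquely determined by this formula, we record the smash
product category as a structure whose fields assert that these formulas indeed
define a `K`-linear category. -/
structure SmashCat (C : LeftHCat K H) where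
  comp : ∀ {X Y Z : C.Obj},
    (C.Hom X Y ⊗[K] H) →ₗ[K] (C.Hom Y Z ⊗[K] H) →ₗ[K] (C.Hom X Z ⊗[K] H)
  comp_tmul : ∀ {X Y Z : C.Obj} (u : C.Hom X Y) (h' : H) (v : C.Hom Y Z) (h : H),
    comp (u ⊗ₜ[K] h') (v ⊗ₜ[K] h) =
      TensorProduct.map
        (((C.comp (X := X) (Y := Y) (Z := Z)).flip v) ∘ₗ ((C.act X Y).flip u))
        (LinearMap.mulRight K h')
        (Coalgebra.comul (R := K) h)
  id_comp : ∀ {X Y : C.Obj} (f : C.Hom X Y ⊗[K] H),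
    comp ((C.idm X) ⊗ₜ[K] (1 : H)) f = f
  comp_id : ∀ {X Y : C.Obj} (f : C.Hom X Y ⊗[K] H),
    comp f ((C.idm Y) ⊗ₜ[K] (1 : H)) = f
  assoc : ∀ {W X Y Z : C.Obj} (f : C.Hom W X ⊗[K] H) (g : C.Hom X Y ⊗[K] H)
    (h : C.Hom Y Z ⊗[K] H), comp (comp f g) h = comp f (comp g h)

/-- The underlying `K`-linear category of the smash product category `C # H`. -/
@[reducible] def SmashCat.lin {C : LeftHCat K H} (S : SmashCat C) : LinCat K where
  Obj := C.Obj
  Hom X Y := C.Hom X Y ⊗[K] H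
  idm X := (C.idm X) ⊗ₜ[K] (1 : H)
  comp := S.comp
  id_comp := S.id_comp
  comp_id := S.comp_id
  assoc := S.assoc

section Restrict

variable {C : LeftHCat K H} (S : SmashCat C)

theorem SmashCat.comp_tmul_one {X Y Z : C.Obj} (f : C.Hom X Y) (g : C.Hom Y Z) :
    S.comp (f ⊗ₜ[K] (1 : H)) (g ⊗ₜ[K] (1 : H)) = (C.comp f g) ⊗ₜ[K] (1 : H) := by
  rw [S.comp_tmul]
  rw [show Coalgebra.comul (R := K) (1 : H) = (1 : H ⊗[K] H) from Bialgebra.comul_one]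
  rw [Algebra.TensorProduct.one_def, TensorProduct.map_tmul]
  simp [C.act_one]

/-- Restriction of scalars from `Mod-(C#H)` to `Mod-C`, on objects. -/
def restrictOb (M : RMod K S.lin) : RMod K C.toLinCat where
  ob := M.ob
  map {X Y} := M.map ∘ₗ ((TensorProduct.mk K (C.Hom X Y) H).flip (1 : H))
  map_id X := M.map_id X
  map_comp {X Y Z} f g := by
    show M.map ((C.comp f g) ⊗ₜ[K] (1 : H)) =
      (M.map (f ⊗ₜ[K] (1 : H))) ∘ₗ (M.map (g ⊗ₜ[K] (1 : H)))
    rw [← S.comp_tmul_one]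
    exact M.map_comp _ _

/-- Restriction of scalars on morphisms. -/
def restrictHom {M N : RMod K S.lin} (η : M ⟶ N) :
    restrictOb S M ⟶ restrictOb S N where
  app := η.app
  natural {X Y} f m := η.natural (f ⊗ₜ[K] (1 : H)) m

/-- The restriction of scalars functor `Mod-(C#H) ⥤ Mod-C`. -/
def restrictFunctor : RMod K S.lin ⥤ RMod K C.toLinCat where
  obj := restrictOb S
  map := restrictHom S
  map_id := by intros; rfl
  map_comp := by intros; rfl

/-- The canonical left `H`-action on the values `M(X)` of a right `C#H`-module:
`h • m := M (id_X # (S h)) m`. -/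
def actOn (M : RMod K S.lin) (X : C.Obj) : H →ₗ[K] M.ob X →ₗ[K] M.ob X :=
  M.map ∘ₗ (TensorProduct.mk K (C.Hom X X) H (C.idm X)) ∘ₗ
    (HopfAlgebra.antipode (R := K) (A := H))

/-- The Sweedler-style right-hand side `∑ h₁ • (η X ((S h₂) • m))` of the adjoint
`H`-action on `C`-module morphisms between (restrictions of) `C#H`-modules. -/
def adjRHS {M N : RMod K S.lin} (η : restrictOb S M ⟶ restrictOb S N)
    (h : H) (X : C.Obj) (m : M.ob X) : N.ob X :=
  TensorProduct.lift
    (((LinearMap.llcomp (R := K) (R₂ := K) (R₃ := K) (M := H) (N := N.ob X) (P := N.ob X)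
        (σ₁₂ := RingHom.id K) (σ₂₃ := RingHom.id K) (σ₁₃ := RingHom.id K)).flip
        ((η.app X) ∘ₗ (((actOn S M X) ∘ₗ (HopfAlgebra.antipode (R := K) (A := H))).flip m)))
      ∘ₗ (actOn S N X))
    (Coalgebra.comul (R := K) h)

end Restrict
end PART3

section PART4
variable {K : Type} [Field K] {H : Type} [Ring H] [HopfAlgebra K H]

/-- The property that an (unbundled) family of maps is a right module structure over a
`K`-linear category. -/
def IsRModMap (K : Type) [Field K] (D : LinCat K) (ob : D.Obj → Type)
    [∀ X, AddCommGroup (ob X)] [∀ X, Module K (ob X)]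
    (map : ∀ X Y : D.Obj, D.Hom X Y →ₗ[K] (ob Y →ₗ[K] ob X)) : Prop :=
  (∀ X, map X X (D.idm X) = LinearMap.id) ∧
  (∀ (X Y Z : D.Obj) (f : D.Hom X Y) (g : D.Hom Y Z),
    map X Z (D.comp f g) = (map X Y f) ∘ₗ (map Y Z g))

/-- Bundle unbundled right module data into a module. -/
def RMod.mk' (K : Type) [Field K] (D : LinCat K) (ob : D.Obj → Type)
    [∀ X, AddCommGroup (ob X)] [∀ X, Module K (ob X)]
    (map : ∀ X Y : D.Obj, D.Hom X Y →ₗ[K] (ob Y →ₗ[K] ob X))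
    (hmap : IsRModMap K D ob map) : RMod K D where
  ob := ob
  map := map _ _
  map_id := hmap.1
  map_comp := hmap.2 _ _ _

/-- A left `H`-equivariant right `C`-module over a left `H`-category `C`:
a right `C`-module together with left `H`-module structures on its values such that
`h • (M f m) = ∑ M (h₂ • f) (h₁ • m)`. -/
structure EqMod (C : LeftHCat K H) extends RMod K C.toLinCat where
  eact : ∀ X, H →ₗ[K] ob X →ₗ[K] ob X
  eact_one : ∀ X, eact X 1 = LinearMap.id
  eact_mul : ∀ X (a b : H), eact X (a * b) = (eact X a) ∘ₗ (eact X b)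
  equivar : ∀ {X Y : C.Obj} (h : H) (f : C.Hom X Y) (m : ob Y),
    eact X h (map f m) =
      TensorProduct.lift
        (((map (X := X) (Y := Y)).comp ((C.act X Y).flip f)).flip ∘ₗ ((eact Y).flip m))
        (Coalgebra.comul (R := K) h)

/-- Morphisms of `H`-equivariant right `C`-modules: `C`-module morphisms whose
components are `H`-linear. -/
@[ext] structure EqModHom {C : LeftHCat K H} (M N : EqMod C) where
  hom : M.toRMod ⟶ N.toRMod
  hlin : ∀ (X : C.Obj) (h : H) (m : M.ob X),
    hom.app X (M.eact X h m) = N.eact X h (hom.app X m)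

instance EqMod.instCategory (C : LeftHCat K H) : Category (EqMod C) where
  Hom M N := EqModHom M N
  id M := ⟨𝟙 M.toRMod, by intros; rfl⟩
  comp {M N P} η θ := ⟨η.hom ≫ θ.hom, by
    intro X h m
    show θ.hom.app X (η.hom.app X (M.eact X h m)) = _
    rw [η.hlin, θ.hlin]
    rfl⟩
  id_comp := by intros; rfl
  comp_id := by intros; rfl
  assoc := by intros; rfl

/-- A left `H`-module, unbundled (an object of `H`-Mod). -/
structure HLMod (K : Type) [Field K] (H : Type) [Ring H] [HopfAlgebra K H] where
  V : Type
  [addV : AddCommGroup V]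
  [modV : Module K V]
  act : H →ₗ[K] V →ₗ[K] V
  act_one : act 1 = LinearMap.id
  act_mul : ∀ a b : H, act (a * b) = (act a) ∘ₗ (act b)

attribute [instance] HLMod.addV HLMod.modV

/-- Morphisms of left `H`-modules. -/
@[ext] structure HLModHom (M N : HLMod K H) where
  f : M.V →ₗ[K] N.V
  hf : ∀ (h : H) (m : M.V), f (M.act h m) = N.act h (f m)

instance HLMod.instCategory : Category (HLMod K H) where
  Hom M N := HLModHom M N
  id M := ⟨LinearMap.id, by intros; rfl⟩
  comp {M N P} g₁ g₂ := ⟨g₂.f ∘ₗ g₁.f, by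
    intro h m
    show g₂.f (g₁.f (M.act h m)) = _
    rw [g₁.hf, g₂.hf]
    rfl⟩
  id_comp := by intros; rfl
  comp_id := by intros; rfl
  assoc := by intros; rfl

/-- The `H`-invariants `M^H = {m | h • m = ε(h) m}` of a left `H`-module. -/
def HLMod.invariants (M : HLMod K H) : Submodule K M.V where
  carrier := {v | ∀ h : H, M.act h v = Coalgebra.counit (R := K) h • v}
  add_mem' := by
    intro a b ha hb h
    rw [map_add, ha h, hb h, smul_add]
  zero_mem' := by
    intro h
    rw [map_zero, smul_zero]
  smul_mem' := by
    intro k v hv h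
    rw [map_smul, hv h, smul_comm]

/-- The `H`-invariants functor `H-Mod ⥤ Vect_K`. -/
def invariantsFunctor : HLMod K H ⥤ ModuleCat K where
  obj M := ModuleCat.of K M.invariants
  map {M N} g := ModuleCat.ofHom (g.f.restrict (p := M.invariants) (q := N.invariants)
    (by
      intro v hv h
      rw [← g.hf, hv h]
      exact map_smul g.f _ _))
  map_id := by intros; rfl
  map_comp := by intros; rfl

/-- An element of a left `H`-module is locally finite if it generates a finite
dimensional submodule. -/
def HLMod.LocFinElt (M : HLMod K H) (v : M.V) : Prop :=
  FiniteDimensional K (Submodule.span K (Set.range (fun h : H => M.act h v)))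

/-- The locally finite part `M^{(H)}` of a left `H`-module. -/
def HLMod.locFin (M : HLMod K H) : Submodule K M.V where
  carrier := {v | M.LocFinElt v}
  add_mem' := by
    intro a b ha hb
    haveI h1 : FiniteDimensional K
        (Submodule.span K (Set.range (fun h : H => M.act h a))) := ha
    haveI h2 : FiniteDimensional K
        (Submodule.span K (Set.range (fun h : H => M.act h b))) := hb
    have hsub : Set.range (fun h : H => M.act h (a + b)) ⊆
        ↑(Submodule.span K (Set.range (fun h : H => M.act h a)) ⊔
          Submodule.span K (Set.range (fun h : H => M.act h b))) := by
      rintro x ⟨h, rfl⟩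
      show M.act h (a + b) ∈ _
      have hadd : M.act h (a + b) = M.act h a + M.act h b := by simp
      rw [hadd]
      exact Submodule.add_mem _
        (Submodule.mem_sup_left (Submodule.subset_span ⟨h, rfl⟩))
        (Submodule.mem_sup_right (Submodule.subset_span ⟨h, rfl⟩))
    have hle := Submodule.span_le.2 hsub
    haveI h3 : FiniteDimensional K
        ↥(Submodule.span K (Set.range (fun h : H => M.act h a)) ⊔
          Submodule.span K (Set.range (fun h : H => M.act h b))) :=
      Submodule.finiteDimensional_sup _ _
    exact Submodule.finiteDimensional_of_le hle
  zero_mem' := by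
    have hsub : Set.range (fun h : H => M.act h (0 : M.V)) ⊆
        ↑(⊥ : Submodule K M.V) := by rintro x ⟨h, rfl⟩; simp
    have hle := Submodule.span_le.2 hsub
    exact Submodule.finiteDimensional_of_le (S₂ := ⊥) hle
  smul_mem' := by
    intro k v hv
    haveI h1 : FiniteDimensional K
        (Submodule.span K (Set.range (fun h : H => M.act h v))) := hv
    have hsub : Set.range (fun h : H => M.act h (k • v)) ⊆
        ↑(Submodule.span K (Set.range (fun h : H => M.act h v))) := by
      rintro x ⟨h, rfl⟩
      show M.act h (k • v) ∈ _
      have hs : M.act h (k • v) = k • M.act h v := by simp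
      rw [hs]
      exact Submodule.smul_mem _ _ (Submodule.subset_span ⟨h, rfl⟩)
    exact Submodule.finiteDimensional_of_le (Submodule.span_le.2 hsub)

/-- A left `H`-module is locally finite iff every element is. -/
def HLMod.IsLocFin (M : HLMod K H) : Prop := ∀ v : M.V, M.LocFinElt v

end PART4

section PART5
open CategoryTheory.Limits
variable {K : Type} [Field K] {H : Type} [Ring H] [HopfAlgebra K H]

instance {D : LinCat K} (M N : RMod K D) : AddCommGroup (M ⟶ N) :=
  inferInstanceAs (AddCommGroup (RModHom K M N))

instance {D : LinCat K} (M N : RMod K D) : Module K (M ⟶ N) :=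
  inferInstanceAs (Module K (RModHom K M N))

/-- Post-composition with a module morphism, as a linear map on `Hom`-spaces. -/
def postcompLin {D : LinCat K} (M : RMod K D) {N P : RMod K D} (θ : N ⟶ P) :
    (M ⟶ N) →ₗ[K] (M ⟶ P) where
  toFun η := η ≫ θ
  map_add' η ν := by
    apply RModHom.app_injective
    funext X
    apply LinearMap.ext
    intro m
    show θ.app X ((η.app X + ν.app X) m) = θ.app X (η.app X m) + θ.app X (ν.app X m)
    rw [LinearMap.add_apply, map_add]
  map_smul' k η := by
    apply RModHom.app_injective
    funext X
    apply LinearMap.ext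
    intro m
    show θ.app X ((k • η.app X) m) = k • θ.app X (η.app X m)
    rw [LinearMap.smul_apply, map_smul]

/-- The (covariant) Hom-functor `Hom(M, -) : Mod-D ⥤ Vect_K` for a module `M` over a
`K`-linear category `D`. -/
def homFunctor {D : LinCat K} (M : RMod K D) : RMod K D ⥤ ModuleCat K where
  obj N := ModuleCat.of K (M ⟶ N)
  map {N P} θ := ModuleCat.ofHom (postcompLin M θ)
  map_id := by intros; rfl
  map_comp := by intros; rfl

/-- The representable right module `h_X = Hom_D(-, X)`. -/
def reprR (D : LinCat K) (X : D.Obj) : RMod K D where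
  ob Y := D.Hom Y X
  map {Y Z} := D.comp (X := Y) (Y := Z) (Z := X)
  map_id Y := by
    apply LinearMap.ext
    intro g
    exact D.id_comp g
  map_comp {Y Z W} f g := by
    apply LinearMap.ext
    intro m
    exact D.assoc f g m

/-- A right module over a `K`-linear category is finitely generated if it admits a
finite family of generators. -/
def RMod.FG {D : LinCat K} (M : RMod K D) : Prop :=
  ∃ (n : ℕ) (Xs : Fin n → D.Obj) (ms : ∀ i, M.ob (Xs i)),
    ∀ (Y : D.Obj) (y : M.ob Y), ∃ f : ∀ i, D.Hom Y (Xs i),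
      y = ∑ i, M.map (f i) (ms i)

/-- A submodule of a right module over a `K`-linear category. -/
@[ext] structure RSubmod {D : LinCat K} (M : RMod K D) where
  sub : ∀ X, Submodule K (M.ob X)
  closed : ∀ {X Y : D.Obj} (f : D.Hom X Y) (m : M.ob Y), m ∈ sub Y → M.map f m ∈ sub X

instance {D : LinCat K} (M : RMod K D) : PartialOrder (RSubmod M) where
  le A B := ∀ X, A.sub X ≤ B.sub X
  le_refl A X := le_rfl
  le_trans A B C hab hbc X := (hab X).trans (hbc X)
  le_antisymm A B hab hba := by
    ext X x
    exact ⟨fun h => hab X h, fun h => hba X h⟩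

/-- A right module over a `K`-linear category is noetherian if its submodules satisfy
the ascending chain condition. -/
def RMod.Noetherian {D : LinCat K} (M : RMod K D) : Prop :=
  ∀ f : ℕ →o RSubmod M, ∃ n, ∀ m, n ≤ m → f m = f n

/-- A `K`-linear category is right noetherian if all the representable right modules
are noetherian. -/
def LinCat.RightNoetherian (D : LinCat K) : Prop :=
  ∀ X : D.Obj, (reprR D X).Noetherian

/-- A left `H`-category is `H`-locally finite if all its `Hom`-spaces are locally
finite `H`-modules. -/
def LeftHCat.LocFin (C : LeftHCat K H) : Prop :=
  ∀ (X Y : C.Obj) (f : C.Hom X Y),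
    FiniteDimensional K (Submodule.span K (Set.range (fun h : H => C.act X Y h f)))

/-- A right `C#H`-module is `H`-locally finite (i.e. belongs to `mod-(C#H)`) if each of
its values is a locally finite `H`-module for the canonical `H`-action. -/
def RMod.HLocFin {C : LeftHCat K H} {S : SmashCat C} (M : RMod K S.lin) : Prop :=
  ∀ (X : C.Obj) (v : M.ob X),
    FiniteDimensional K (Submodule.span K (Set.range (fun h : H => actOn S M X h v)))

/-- The property of being a Grothendieck category: abelian, cocomplete, with exact
filtered colimits (AB5) and a separator. -/
def IsGrothendieckCat (A : Type*) [Category A] : Prop :=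
  ∃ (_ : Abelian A) (_ : HasColimits A) (hf : HasFilteredColimits A),
    @AB5 A _ hf ∧ ∃ G : A, IsSeparator G

end PART5

section PART6
open CategoryTheory.Limits ZeroObject

/-- A first-quadrant cohomological spectral sequence in an abelian category `A`,
with second page `E₂` and converging to the graded abutment `abut`. -/
structure FirstQuadrantCohomSS (A : Type*) [Category A] [Abelian A]
    (E₂ : ℤ → ℤ → A) (abut : ℤ → A) where
  /-- the pages of the spectral sequence, defined for `r ≥ 2` -/
  page : ℕ → ℤ → ℤ → A
  /-- the second page is the given `E₂` -/
  pageTwo : ∀ p q : ℤ, 0 ≤ p → 0 ≤ q → (page 2 p q ≅ E₂ p q)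
  /-- first quadrant: pages vanish outside `p, q ≥ 0` -/
  vanish : ∀ (r : ℕ) (p q : ℤ), p < 0 ∨ q < 0 → IsZero (page r p q)
  /-- the differentials, of bidegree `(r, 1 - r)` -/
  d : ∀ (r : ℕ) (p q : ℤ), page r p q ⟶ page r (p + r) (q + 1 - r)
  d_comp_d : ∀ (r : ℕ) (p q : ℤ), d r p q ≫ d r (p + r) (q + 1 - r) = 0
  /-- each page is the homology of the previous one -/
  turn : ∀ (r : ℕ) (p q : ℤ), 2 ≤ r →
    (page (r + 1) (p + r) (q + 1 - r) ≅
      (CategoryTheory.ShortComplex.mk (d r p q) (d r (p + r) (q + 1 - r))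
        (d_comp_d r p q)).homology)
  /-- the page at which position `(p,q)` has stabilized -/
  stab : ℤ → ℤ → ℕ
  stab_ge : ∀ p q, 2 ≤ stab p q
  hstab : ∀ (p q : ℤ) (r : ℕ), stab p q ≤ r →
    Nonempty (page r p q ≅ page (stab p q) p q)
  /-- a (finite, exhaustive) decreasing filtration on each piece of the abutment -/
  filt : ∀ n : ℤ, ℤ → Subobject (abut n)
  filt_antitone : ∀ n, Antitone (filt n)
  filt_top : ∀ (n p : ℤ), 0 ≤ n → p ≤ 0 → filt n p = ⊤
  filt_bot : ∀ (n p : ℤ), 0 ≤ n → n < p → filt n p = ⊥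
  /-- the graded pieces of the filtration are the stable values of the pages -/
  graded : ∀ (n p : ℤ), 0 ≤ p → p ≤ n →
    Nonempty ((cokernel (Subobject.ofLE (filt n (p + 1)) (filt n p)
      (filt_antitone n (by omega)))) ≅ page (stab p (n - p)) p (n - p))

end PART6

section PART7
open CategoryTheory.Limits
variable (K : Type) [Field K] (H : Type) [Ring H] [HopfAlgebra K H]

/-- The property that a linear map `V →ₗ V ⊗ H` is a (counital, coassociative) right
`H`-comodule structure. -/
def IsComodStr (V : Type) [AddCommGroup V] [Module K V]
    (coact : V →ₗ[K] V ⊗[K] H) : Prop :=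
  ((TensorProduct.rid K V).toLinearMap ∘ₗ
      (LinearMap.lTensor V (Coalgebra.counit (R := K) (A := H))) ∘ₗ coact = LinearMap.id) ∧
  ((TensorProduct.assoc K V H H).toLinearMap ∘ₗ (LinearMap.rTensor H coact) ∘ₗ coact =
      (LinearMap.lTensor V (Coalgebra.comul (R := K) (A := H))) ∘ₗ coact)

/-- A right `H`-comodule (an object of `Comod-H`). -/
structure HComod where
  V : Type
  [addV : AddCommGroup V]
  [modV : Module K V]
  coact : V →ₗ[K] V ⊗[K] H
  isComod : IsComodStr K H V coact

attribute [instance] HComod.addV HComod.modV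

variable {K H}

/-- Morphisms of right `H`-comodules. -/
@[ext] structure HComodHom (M N : HComod K H) where
  f : M.V →ₗ[K] N.V
  hf : ∀ m : M.V, N.coact (f m) = (LinearMap.rTensor H f) (M.coact m)

instance HComod.instCategory : Category (HComod K H) where
  Hom M N := HComodHom M N
  id M := ⟨LinearMap.id, by
    intro m
    show M.coact m = (LinearMap.rTensor H LinearMap.id) (M.coact m)
    rw [LinearMap.rTensor_id]
    rfl⟩
  comp {M N P} g₁ g₂ := ⟨g₂.f ∘ₗ g₁.f, by
    intro m
    show P.coact (g₂.f (g₁.f m)) = _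
    rw [g₂.hf, g₁.hf]
    rw [← LinearMap.comp_apply, ← LinearMap.rTensor_comp]⟩
  id_comp := by intros; rfl
  comp_id := by intros; rfl
  assoc := by intros; rfl

/-- The `H`-coinvariants `M^{coH} = {m | ρ(m) = m ⊗ 1}` of a right `H`-comodule. -/
def HComod.coinvariants (M : HComod K H) : Submodule K M.V where
  carrier := {v | M.coact v = v ⊗ₜ[K] (1 : H)}
  add_mem' := by
    intro a b ha hb
    show M.coact (a + b) = (a + b) ⊗ₜ[K] (1 : H)
    rw [map_add, ha, hb, TensorProduct.add_tmul]
  zero_mem' := by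
    show M.coact 0 = (0 : M.V) ⊗ₜ[K] (1 : H)
    rw [map_zero, TensorProduct.zero_tmul]
  smul_mem' := by
    intro k v hv
    show M.coact (k • v) = (k • v) ⊗ₜ[K] (1 : H)
    rw [map_smul, hv, TensorProduct.smul_tmul']

/-- The `H`-coinvariants functor `Comod-H ⥤ Vect_K`. -/
def coinvariantsFunctor : HComod K H ⥤ ModuleCat K where
  obj M := ModuleCat.of K M.coinvariants
  map {M N} g := ModuleCat.ofHom (g.f.restrict (p := M.coinvariants) (q := N.coinvariants)
    (by
      intro v hv
      show N.coact (g.f v) = g.f v ⊗ₜ[K] 1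
      rw [g.hf, hv]
      simp))
  map_id := by intros; rfl
  map_comp := by intros; rfl

variable (K H)

/-- A right co-`H`-category: a `K`-linear category enriched in right `H`-comodules,
i.e. `ρ(id_X) = id_X ⊗ 1` and `ρ(v ∘ u) = ∑ v₀ ∘ u₀ ⊗ v₁ u₁`. -/
structure CoHCat extends LinCat K where
  coact : ∀ X Y, Hom X Y →ₗ[K] Hom X Y ⊗[K] H
  isComod : ∀ X Y, IsComodStr K H (Hom X Y) (coact X Y)
  coact_idm : ∀ X, coact X X (idm X) = (idm X) ⊗ₜ[K] (1 : H)
  coact_comp : ∀ {X Y Z : Obj} (u : Hom X Y) (v : Hom Y Z),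
    coact X Z (comp u v) =
      ((TensorProduct.map (TensorProduct.lift (comp (X := X) (Y := Y) (Z := Z)))
          ((LinearMap.mul' K H) ∘ₗ (TensorProduct.comm K H H).toLinearMap)) ∘ₗ
        (TensorProduct.tensorTensorTensorComm K (Hom X Y) H (Hom Y Z) H).toLinearMap)
      ((coact X Y u) ⊗ₜ[K] (coact Y Z v))

variable {K H}

/-- A left module over a `K`-linear category: a `K`-linear covariant functor to
vector spaces. -/
structure LMod (D : LinCat K) where
  ob : D.Obj → Type
  [addOb : ∀ X, AddCommGroup (ob X)]
  [modOb : ∀ X, Module K (ob X)]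
  map : ∀ {X Y : D.Obj}, D.Hom X Y →ₗ[K] (ob X →ₗ[K] ob Y)
  map_id : ∀ X, map (D.idm X) = LinearMap.id
  map_comp : ∀ {X Y Z : D.Obj} (f : D.Hom X Y) (g : D.Hom Y Z),
    map (D.comp f g) = (map g) ∘ₗ (map f)

attribute [instance] LMod.addOb LMod.modOb

/-- A morphism of left modules over a `K`-linear category. -/
@[ext] structure LModHom {D : LinCat K} (M N : LMod D) where
  app : ∀ X, M.ob X →ₗ[K] N.ob X
  natural : ∀ {X Y : D.Obj} (f : D.Hom X Y) (m : M.ob X),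
    app Y (M.map f m) = N.map f (app X m)

instance LMod.instCategory (D : LinCat K) : Category (LMod D) where
  Hom M N := LModHom M N
  id M := ⟨fun _ => LinearMap.id, by intros; rfl⟩
  comp η θ := ⟨fun X => (θ.app X).comp (η.app X), by
    intro X Y f m
    simp only [LinearMap.comp_apply, η.natural, θ.natural]⟩
  id_comp := by intros; rfl
  comp_id := by intros; rfl
  assoc := by intros; rfl

/-- The representable left module `ₓh = Hom_D(X, -)`. -/
def reprL (D : LinCat K) (X : D.Obj) : LMod D where
  ob Y := D.Hom X Y
  map {Y Z} := (D.comp (X := X) (Y := Y) (Z := Z)).flip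
  map_id Y := by
    apply LinearMap.ext
    intro g
    exact D.comp_id g
  map_comp {Y Z W} f g := by
    apply LinearMap.ext
    intro m
    exact (D.assoc m f g).symm

/-- A left module over a `K`-linear category is finitely generated if it admits a
finite family of generators. -/
def LMod.FG {D : LinCat K} (M : LMod D) : Prop :=
  ∃ (n : ℕ) (Xs : Fin n → D.Obj) (ms : ∀ i, M.ob (Xs i)),
    ∀ (Y : D.Obj) (y : M.ob Y), ∃ f : ∀ i, D.Hom (Xs i) Y,
      y = ∑ i, M.map (f i) (ms i)

/-- A submodule of a left module over a `K`-linear category. -/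
@[ext] structure LSubmod {D : LinCat K} (M : LMod D) where
  sub : ∀ X, Submodule K (M.ob X)
  closed : ∀ {X Y : D.Obj} (f : D.Hom X Y) (m : M.ob X), m ∈ sub X → M.map f m ∈ sub Y

instance {D : LinCat K} (M : LMod D) : PartialOrder (LSubmod M) where
  le A B := ∀ X, A.sub X ≤ B.sub X
  le_refl A X := le_rfl
  le_trans A B C hab hbc X := (hab X).trans (hbc X)
  le_antisymm A B hab hba := by
    ext X x
    exact ⟨fun h => hab X h, fun h => hba X h⟩

/-- A left module is noetherian if its submodules satisfy the ascending chain
condition. -/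
def LMod.Noetherian {D : LinCat K} (M : LMod D) : Prop :=
  ∀ f : ℕ →o LSubmod M, ∃ n, ∀ m, n ≤ m → f m = f n

/-- A `K`-linear category is left noetherian if all representable left modules are
noetherian. -/
def LinCat.LeftNoetherian (D : LinCat K) : Prop :=
  ∀ X : D.Obj, (reprL D X).Noetherian

/-- The Sweedler right-hand side `∑ M(f₀)(m₀) ⊗ f₁ m₁` of the compatibility condition
for relative `(D,H)`-Hopf modules. -/
def relHopfRHS {D : CoHCat K H} (M : LMod D.toLinCat)
    {X Y : D.Obj} (ρf : D.Hom X Y ⊗[K] H) (ρm : M.ob X ⊗[K] H) : M.ob Y ⊗[K] H :=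
  ((TensorProduct.map (TensorProduct.lift (M.map (X := X) (Y := Y)))
      (LinearMap.mul' K H)) ∘ₗ
    (TensorProduct.tensorTensorTensorComm K (D.Hom X Y) H (M.ob X) H).toLinearMap)
  (ρf ⊗ₜ[K] ρm)

/-- A relative `(D,H)`-Hopf module over a right co-`H`-category `D`. -/
structure RelHopfMod (D : CoHCat K H) extends LMod D.toLinCat where
  coact : ∀ X, ob X →ₗ[K] ob X ⊗[K] H
  isComod : ∀ X, IsComodStr K H (ob X) (coact X)
  compat : ∀ {X Y : D.Obj} (f : D.Hom X Y) (m : ob X),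
    coact Y (map f m) = relHopfRHS toLMod (D.coact X Y f) (coact X m)

/-- Morphisms of relative `(D,H)`-Hopf modules: `D`-module morphisms whose components
are `H`-colinear. -/
@[ext] structure RelHopfHom {D : CoHCat K H} (M N : RelHopfMod D) where
  hom : M.toLMod ⟶ N.toLMod
  colin : ∀ (X : D.Obj) (m : M.ob X),
    N.coact X (hom.app X m) = (LinearMap.rTensor H (hom.app X)) (M.coact X m)

instance RelHopfMod.instCategory (D : CoHCat K H) : Category (RelHopfMod D) where
  Hom M N := RelHopfHom M N
  id M := ⟨𝟙 M.toLMod, by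
    intro X m
    show M.coact X m = (LinearMap.rTensor H LinearMap.id) (M.coact X m)
    rw [LinearMap.rTensor_id]
    rfl⟩
  comp {M N P} η θ := ⟨η.hom ≫ θ.hom, by
    intro X m
    show P.coact X (θ.hom.app X (η.hom.app X m)) = _
    rw [θ.colin, η.colin, ← LinearMap.comp_apply, ← LinearMap.rTensor_comp]
    rfl⟩
  id_comp := by intros; rfl
  comp_id := by intros; rfl
  assoc := by intros; rfl

namespace LModHom

variable {D : LinCat K} {M N : LMod D}

instance : Zero (LModHom M N) := ⟨⟨fun _ => 0, by intros; simp⟩⟩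

instance : Add (LModHom M N) :=
  ⟨fun η ν => ⟨fun X => η.app X + ν.app X, by
    intro X Y f m
    simp [η.natural, ν.natural]⟩⟩

instance : Neg (LModHom M N) :=
  ⟨fun η => ⟨fun X => -η.app X, by intro X Y f m; simp [η.natural]⟩⟩

instance : Sub (LModHom M N) :=
  ⟨fun η ν => ⟨fun X => η.app X - ν.app X, by
    intro X Y f m
    simp [η.natural, ν.natural]⟩⟩

instance : SMul K (LModHom M N) :=
  ⟨fun k η => ⟨fun X => k • η.app X, by intro X Y f m; simp [η.natural]⟩⟩

instance : SMul ℕ (LModHom M N) :=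
  ⟨fun n η => ⟨fun X => n • η.app X, by intro X Y f m; simp [η.natural]⟩⟩

instance : SMul ℤ (LModHom M N) :=
  ⟨fun n η => ⟨fun X => n • η.app X, by intro X Y f m; simp [η.natural]⟩⟩

theorem app_injective :
    Function.Injective (fun (η : LModHom M N) => η.app) := by
  intro η ν h; ext X m; exact congrFun (congrArg (fun u => (u X : M.ob X → N.ob X)) h) m

instance : AddCommGroup (LModHom M N) :=
  Function.Injective.addCommGroup (fun η => η.app) app_injective
    rfl (fun _ _ => rfl) (fun _ => rfl) (fun _ _ => rfl) (fun _ _ => rfl) (fun _ _ => rfl)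

instance : Module K (LModHom M N) :=
  Function.Injective.module K
    ⟨⟨fun η => η.app, rfl⟩, fun _ _ => rfl⟩ app_injective (fun _ _ => rfl)

end LModHom

instance {D : LinCat K} (M N : LMod D) : AddCommGroup (M ⟶ N) :=
  inferInstanceAs (AddCommGroup (LModHom M N))

instance {D : LinCat K} (M N : LMod D) : Module K (M ⟶ N) :=
  inferInstanceAs (Module K (LModHom M N))

/-- Post-composition with a module morphism, as a linear map on `Hom`-spaces. -/
def postcompLinL {D : LinCat K} (M : LMod D) {N P : LMod D} (θ : N ⟶ P) :
    (M ⟶ N) →ₗ[K] (M ⟶ P) where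
  toFun η := η ≫ θ
  map_add' η ν := by
    apply LModHom.app_injective
    funext X
    apply LinearMap.ext
    intro m
    show θ.app X ((η.app X + ν.app X) m) = θ.app X (η.app X m) + θ.app X (ν.app X m)
    rw [LinearMap.add_apply, map_add]
  map_smul' k η := by
    apply LModHom.app_injective
    funext X
    apply LinearMap.ext
    intro m
    show θ.app X ((k • η.app X) m) = k • θ.app X (η.app X m)
    rw [LinearMap.smul_apply, map_smul]

/-- The (covariant) Hom-functor `Hom(M, -) : D-Mod ⥤ Vect_K` for a left module `M` over
a `K`-linear category `D`. -/
def homFunctorL {D : LinCat K} (M : LMod D) : LMod D ⥤ ModuleCat K where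
  obj N := ModuleCat.of K (M ⟶ N)
  map {N P} θ := ModuleCat.ofHom (postcompLinL M θ)
  map_id := by intros; rfl
  map_comp := by intros; rfl

end PART7

section LocFinPart
variable {K : Type} [Field K] {H : Type} [Ring H] [HopfAlgebra K H]

theorem HLMod.locFin_act_mem (W : HLMod K H) (h : H) {v : W.V} (hv : v ∈ W.locFin) :
    W.act h v ∈ W.locFin := by
  haveI hfd : FiniteDimensional K
      (Submodule.span K (Set.range (fun h' : H => W.act h' v))) := hv
  have hsub : Set.range (fun h' : H => W.act h' (W.act h v)) ⊆
      ↑(Submodule.span K (Set.range (fun h' : H => W.act h' v))) := by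
    rintro x ⟨h', rfl⟩
    have hx : W.act h' (W.act h v) = W.act (h' * h) v := by rw [W.act_mul]; rfl
    show W.act h' (W.act h v) ∈ _
    rw [hx]
    exact Submodule.subset_span ⟨h' * h, rfl⟩
  show W.LocFinElt (W.act h v)
  exact Submodule.finiteDimensional_of_le (Submodule.span_le.2 hsub)

/-- The locally finite part `W^{(H)}` of a left `H`-module, as a left `H`-module. -/
def HLMod.locFinMod (W : HLMod K H) : HLMod K H where
  V := ↥W.locFin
  act :=
    { toFun := fun h => (W.act h).restrict (p := W.locFin) (q := W.locFin)
        (fun _ hv => W.locFin_act_mem h hv)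
      map_add' := by
        intro a b
        apply LinearMap.ext
        intro v
        apply Subtype.ext
        show W.act (a + b) ↑v = W.act a ↑v + W.act b ↑v
        rw [map_add W.act a b]
        rfl
      map_smul' := by
        intro k a
        apply LinearMap.ext
        intro v
        apply Subtype.ext
        show W.act (k • a) ↑v = k • W.act a ↑v
        rw [map_smul W.act k a]
        rfl }
  act_one := by
    apply LinearMap.ext
    intro v
    apply Subtype.ext
    show W.act 1 ↑v = ↑v
    rw [W.act_one]
    rfl
  act_mul := by
    intro a b
    apply LinearMap.ext
    intro v
    apply Subtype.ext
    show W.act (a * b) ↑v = W.act a (W.act b ↑v)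
    rw [W.act_mul]
    rfl

/-- The category `H-mod` of locally finite left `H`-modules, as a full subcategory of
`H-Mod`. -/
abbrev HmodCat (K : Type) [Field K] (H : Type) [Ring H] [HopfAlgebra K H] :=
  CategoryTheory.ObjectProperty.FullSubcategory (fun W : HLMod K H => W.IsLocFin)

end LocFinPart

section HopfAux
open Coalgebra HopfAlgebra
set_option synthInstance.maxHeartbeats 400000
set_option maxHeartbeats 1000000

variable {K : Type} [Field K] {H : Type} [Ring H] [HopfAlgebra K H]

lemma antipode_one' : HopfAlgebra.antipode (R := K) (1 : H) = 1 := by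
  have := mul_antipode_rTensor_comul_apply (R := K) (A := H) 1
  rw [Bialgebra.comul_one, Algebra.TensorProduct.one_def] at this
  simpa using this

lemma sum_counit_smul_left {a : H} {ι : Type*} (r : Coalgebra.Repr K a ι) :
    ∑ i ∈ r.index, counit (R := K) (r.right i) • r.left i = a := by
  have h := Coalgebra.sum_tmul_counit_eq (R := K) r
  have := congrArg (TensorProduct.rid K H) h
  simp only [map_sum, TensorProduct.rid_tmul, one_smul] at this
  exact this

lemma sum_counit_smul_right {a : H} {ι : Type*} (r : Coalgebra.Repr K a ι) :
    ∑ i ∈ r.index, counit (R := K) (r.left i) • r.right i = a := by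
  have h := Coalgebra.sum_counit_tmul_eq (R := K) r
  have := congrArg (TensorProduct.lid K H) h
  simp only [map_sum, TensorProduct.lid_tmul, one_smul] at this
  exact this

/-- A representation of the comultiplication of a product. -/
noncomputable def reprMul {a b : H} {ι ι' : Type*} (r : Coalgebra.Repr K a ι)
    (s : Coalgebra.Repr K b ι') : Coalgebra.Repr K (a * b) (ι × ι') where
  index := r.index ×ˢ s.index
  left p := r.left p.1 * s.left p.2
  right p := r.right p.1 * s.right p.2
  eq := by
    show _ = Coalgebra.comul (R := K) (a * b)
    rw [Bialgebra.comul_mul, ← r.eq, ← s.eq, Finset.sum_mul_sum, Finset.sum_product]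
    simp [Algebra.TensorProduct.tmul_mul_tmul]

noncomputable def thetaMap : (H ⊗[K] (H ⊗[K] H)) ⊗[K] (H ⊗[K] (H ⊗[K] H)) →ₗ[K] H :=
  LinearMap.mul' K H ∘ₗ
    TensorProduct.map ((antipode (R := K)) ∘ₗ LinearMap.mul' K H)
      (LinearMap.mul' K H ∘ₗ
        TensorProduct.map (LinearMap.mul' K H)
          (LinearMap.mul' K H ∘ₗ
            TensorProduct.map (antipode (R := K)) (antipode (R := K)) ∘ₗ
            (TensorProduct.comm K H H).toLinearMap) ∘ₗ
        (TensorProduct.tensorTensorTensorComm K H H H H).toLinearMap) ∘ₗ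
    (TensorProduct.tensorTensorTensorComm K H (H ⊗[K] H) H (H ⊗[K] H)).toLinearMap

lemma thetaMap_tmul (x y z u v w : H) :
    thetaMap (K := K) (H := H) ((x ⊗ₜ (y ⊗ₜ z)) ⊗ₜ (u ⊗ₜ (v ⊗ₜ w))) =
      antipode (R := K) (x * u) * ((y * v) * (antipode (R := K) w * antipode (R := K) z)) := by
  simp [thetaMap, TensorProduct.tensorTensorTensorComm_tmul, LinearMap.mul'_apply]
lemma thetaR_eq {a b : H} {ι ι' κ κ' : Type*} (r : Coalgebra.Repr K a ι) (s : Coalgebra.Repr K b ι')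
    (r2 : ∀ i, Coalgebra.Repr K (r.right i) κ) (s2 : ∀ k, Coalgebra.Repr K (s.right k) κ') :
    thetaMap (K := K) (H := H)
      ((∑ i ∈ r.index, ∑ j ∈ (r2 i).index,
          r.left i ⊗ₜ[K] ((r2 i).left j ⊗ₜ[K] (r2 i).right j)) ⊗ₜ[K]
       (∑ k ∈ s.index, ∑ l ∈ (s2 k).index,
          s.left k ⊗ₜ[K] ((s2 k).left l ⊗ₜ[K] (s2 k).right l))) =
      antipode (R := K) (a * b) := by
  classical
  set S : H →ₗ[K] H := antipode (R := K) with hS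
  have e1 : thetaMap (K := K) (H := H)
      ((∑ i ∈ r.index, ∑ j ∈ (r2 i).index,
          r.left i ⊗ₜ[K] ((r2 i).left j ⊗ₜ[K] (r2 i).right j)) ⊗ₜ[K]
       (∑ k ∈ s.index, ∑ l ∈ (s2 k).index,
          s.left k ⊗ₜ[K] ((s2 k).left l ⊗ₜ[K] (s2 k).right l))) =
      ∑ i ∈ r.index, ∑ j ∈ (r2 i).index, ∑ k ∈ s.index, ∑ l ∈ (s2 k).index,
        S (r.left i * s.left k) *
          (((r2 i).left j * (s2 k).left l) *
            (S ((s2 k).right l) * S ((r2 i).right j))) := by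
    rw [TensorProduct.sum_tmul, map_sum]
    refine Finset.sum_congr rfl fun i _ => ?_
    rw [TensorProduct.sum_tmul, map_sum]
    refine Finset.sum_congr rfl fun j _ => ?_
    rw [TensorProduct.tmul_sum, map_sum]
    refine Finset.sum_congr rfl fun k _ => ?_
    rw [TensorProduct.tmul_sum, map_sum]
    refine Finset.sum_congr rfl fun l _ => ?_
    exact thetaMap_tmul _ _ _ _ _ _
  rw [e1]
  have e2 : ∀ i ∈ r.index, ∀ j ∈ (r2 i).index, ∀ k ∈ s.index,
      (∑ l ∈ (s2 k).index,
        S (r.left i * s.left k) *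
          (((r2 i).left j * (s2 k).left l) *
            (S ((s2 k).right l) * S ((r2 i).right j)))) =
      counit (R := K) (s.right k) •
        (S (r.left i * s.left k) * ((r2 i).left j * S ((r2 i).right j))) := by
    intro i _ j _ k _
    have hfold : ∀ l, S (r.left i * s.left k) *
          (((r2 i).left j * (s2 k).left l) *
            (S ((s2 k).right l) * S ((r2 i).right j))) =
        S (r.left i * s.left k) *
          ((r2 i).left j * (((s2 k).left l * S ((s2 k).right l)) * S ((r2 i).right j))) := by
      intro l; simp only [mul_assoc]
    simp only [hfold]
    rw [← Finset.mul_sum]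
    rw [show (∑ l ∈ (s2 k).index,
        ((r2 i).left j * (((s2 k).left l * S ((s2 k).right l)) * S ((r2 i).right j)))) =
        (r2 i).left j * ((∑ l ∈ (s2 k).index, (s2 k).left l * S ((s2 k).right l)) *
          S ((r2 i).right j)) by rw [Finset.sum_mul, Finset.mul_sum]]
    rw [sum_mul_antipode_eq_smul (R := K) (s2 k)]
    rw [smul_mul_assoc, one_mul, mul_smul_comm, mul_smul_comm]
  calc ∑ i ∈ r.index, ∑ j ∈ (r2 i).index, ∑ k ∈ s.index, ∑ l ∈ (s2 k).index,
        S (r.left i * s.left k) *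
          (((r2 i).left j * (s2 k).left l) *
            (S ((s2 k).right l) * S ((r2 i).right j)))
      = ∑ i ∈ r.index, ∑ k ∈ s.index, ∑ j ∈ (r2 i).index,
          counit (R := K) (s.right k) •
            (S (r.left i * s.left k) * ((r2 i).left j * S ((r2 i).right j))) := by
        refine Finset.sum_congr rfl fun i hi => ?_
        rw [Finset.sum_comm]
        refine Finset.sum_congr rfl fun k hk => ?_
        refine Finset.sum_congr rfl fun j hj => ?_
        exact e2 i hi j hj k hk
    _ = ∑ i ∈ r.index, ∑ k ∈ s.index,
          (counit (R := K) (r.right i) * counit (R := K) (s.right k)) •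
            S (r.left i * s.left k) := by
        refine Finset.sum_congr rfl fun i hi => Finset.sum_congr rfl fun k hk => ?_
        rw [← Finset.smul_sum, ← Finset.mul_sum, sum_mul_antipode_eq_smul (R := K) (r2 i)]
        rw [mul_smul_comm, mul_one, smul_smul, mul_comm]
    _ = S (a * b) := by
        have ha := sum_counit_smul_left (K := K) r
        have hb := sum_counit_smul_left (K := K) s
        conv_rhs => rw [← ha, ← hb]
        rw [Finset.sum_mul_sum, map_sum]
        refine Finset.sum_congr rfl fun i hi => ?_
        rw [map_sum]
        refine Finset.sum_congr rfl fun k hk => ?_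
        rw [smul_mul_assoc, mul_smul_comm, smul_smul, map_smul]

lemma thetaL_eq {a b : H} {ι ι' κ κ' : Type*} (r : Coalgebra.Repr K a ι) (s : Coalgebra.Repr K b ι')
    (r1 : ∀ i, Coalgebra.Repr K (r.left i) κ) (s1 : ∀ k, Coalgebra.Repr K (s.left k) κ') :
    thetaMap (K := K) (H := H)
      ((∑ i ∈ r.index, ∑ j ∈ (r1 i).index,
          (r1 i).left j ⊗ₜ[K] ((r1 i).right j ⊗ₜ[K] r.right i)) ⊗ₜ[K]
       (∑ k ∈ s.index, ∑ l ∈ (s1 k).index,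
          (s1 k).left l ⊗ₜ[K] ((s1 k).right l ⊗ₜ[K] s.right k))) =
      antipode (R := K) b * antipode (R := K) a := by
  classical
  set S : H →ₗ[K] H := antipode (R := K) with hS
  have e1 : thetaMap (K := K) (H := H)
      ((∑ i ∈ r.index, ∑ j ∈ (r1 i).index,
          (r1 i).left j ⊗ₜ[K] ((r1 i).right j ⊗ₜ[K] r.right i)) ⊗ₜ[K]
       (∑ k ∈ s.index, ∑ l ∈ (s1 k).index,
          (s1 k).left l ⊗ₜ[K] ((s1 k).right l ⊗ₜ[K] s.right k))) =
      ∑ i ∈ r.index, ∑ j ∈ (r1 i).index, ∑ k ∈ s.index, ∑ l ∈ (s1 k).index,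
        S ((r1 i).left j * (s1 k).left l) *
          (((r1 i).right j * (s1 k).right l) *
            (S (s.right k) * S (r.right i))) := by
    rw [TensorProduct.sum_tmul, map_sum]
    refine Finset.sum_congr rfl fun i _ => ?_
    rw [TensorProduct.sum_tmul, map_sum]
    refine Finset.sum_congr rfl fun j _ => ?_
    rw [TensorProduct.tmul_sum, map_sum]
    refine Finset.sum_congr rfl fun k _ => ?_
    rw [TensorProduct.tmul_sum, map_sum]
    refine Finset.sum_congr rfl fun l _ => ?_
    exact thetaMap_tmul _ _ _ _ _ _
  rw [e1]
  have e2 : ∀ i ∈ r.index, ∀ k ∈ s.index,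
      (∑ j ∈ (r1 i).index, ∑ l ∈ (s1 k).index,
        S ((r1 i).left j * (s1 k).left l) *
          (((r1 i).right j * (s1 k).right l) *
            (S (s.right k) * S (r.right i)))) =
      (counit (R := K) (r.left i) * counit (R := K) (s.left k)) •
        (S (s.right k) * S (r.right i)) := by
    intro i _ k _
    have hterm : ∀ j l, S ((r1 i).left j * (s1 k).left l) *
          (((r1 i).right j * (s1 k).right l) * (S (s.right k) * S (r.right i))) =
        (S ((r1 i).left j * (s1 k).left l) * ((r1 i).right j * (s1 k).right l)) *
          (S (s.right k) * S (r.right i)) := fun j l => (mul_assoc _ _ _).symm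
    simp only [hterm]
    rw [show (∑ j ∈ (r1 i).index, ∑ l ∈ (s1 k).index,
        (S ((r1 i).left j * (s1 k).left l) * ((r1 i).right j * (s1 k).right l)) *
          (S (s.right k) * S (r.right i))) =
        (∑ j ∈ (r1 i).index, ∑ l ∈ (s1 k).index,
          S ((r1 i).left j * (s1 k).left l) * ((r1 i).right j * (s1 k).right l)) *
          (S (s.right k) * S (r.right i)) from by
      rw [Finset.sum_mul]
      exact Finset.sum_congr rfl fun j _ => (Finset.sum_mul _ _ _).symm]
    have hprod : (∑ p ∈ (r1 i).index ×ˢ (s1 k).index,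
        S ((r1 i).left p.1 * (s1 k).left p.2) *
          ((r1 i).right p.1 * (s1 k).right p.2)) =
        counit (R := K) (r.left i * s.left k) • (1 : H) :=
      sum_antipode_mul_eq_smul (R := K) (reprMul (r1 i) (s1 k))
    rw [Finset.sum_product] at hprod
    rw [hprod, Bialgebra.counit_mul, smul_mul_assoc, one_mul]
  calc ∑ i ∈ r.index, ∑ j ∈ (r1 i).index, ∑ k ∈ s.index, ∑ l ∈ (s1 k).index,
        S ((r1 i).left j * (s1 k).left l) *
          (((r1 i).right j * (s1 k).right l) *
            (S (s.right k) * S (r.right i)))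
      = ∑ i ∈ r.index, ∑ k ∈ s.index,
          (counit (R := K) (r.left i) * counit (R := K) (s.left k)) •
            (S (s.right k) * S (r.right i)) := by
        refine Finset.sum_congr rfl fun i hi => ?_
        rw [Finset.sum_comm]
        exact Finset.sum_congr rfl fun k hk => e2 i hi k hk
    _ = S b * S a := by
        have ha := sum_counit_smul_right (K := K) r
        have hb := sum_counit_smul_right (K := K) s
        conv_rhs => rw [← hb, ← ha, map_sum, map_sum, Finset.sum_mul_sum]
        rw [Finset.sum_comm (s := r.index) (t := s.index)]
        refine Finset.sum_congr rfl fun k hk => ?_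
        refine Finset.sum_congr rfl fun i hi => ?_
        rw [map_smul, map_smul, smul_mul_smul_comm,
          mul_comm (counit (R := K) (s.left k)) (counit (R := K) (r.left i))]

lemma antipode_mul' (a b : H) :
    antipode (R := K) (a * b) = antipode (R := K) b * antipode (R := K) a := by
  classical
  let r := ℛ K a
  let s := ℛ K b
  let r1 : ∀ i, Coalgebra.Repr K (r.left i) (H × H) := fun i => ℛ K _
  let r2 : ∀ i, Coalgebra.Repr K (r.right i) (H × H) := fun i => ℛ K _
  let s1 : ∀ k, Coalgebra.Repr K (s.left k) (H × H) := fun k => ℛ K _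
  let s2 : ∀ k, Coalgebra.Repr K (s.right k) (H × H) := fun k => ℛ K _
  have Ea := Coalgebra.sum_tmul_tmul_eq r r1 r2
  have Eb := Coalgebra.sum_tmul_tmul_eq s s1 s2
  have hL := thetaL_eq r s r1 s1
  have hR := thetaR_eq r s r2 s2
  rw [Ea, Eb] at hL
  rw [hR] at hL
  exact hL


lemma key0 (h : H) :
    LinearMap.lTensor H ((Algebra.linearMap K H) ∘ₗ (Coalgebra.counit (R := K)))
      (Coalgebra.comul (R := K) h) = h ⊗ₜ[K] (1 : H) := by
  rw [LinearMap.lTensor_comp, LinearMap.comp_apply, Coalgebra.lTensor_counit_comul]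
  simp

lemma EB_comul (h : H) :
    LinearMap.lTensor H (LinearMap.mul' K H ∘ₗ LinearMap.rTensor H (antipode (R := K)))
      ((TensorProduct.assoc K H H H)
        ((LinearMap.rTensor H (Coalgebra.comul (R := K))) (Coalgebra.comul (R := K) h))) =
      h ⊗ₜ[K] (1 : H) := by
  rw [Coalgebra.coassoc_apply, ← LinearMap.lTensor_comp_apply, LinearMap.comp_assoc,
    mul_antipode_rTensor_comul]
  exact key0 h

lemma assoc_lTensorS (z : H ⊗[K] H) (c : H) :
    (TensorProduct.assoc K H H H) (z ⊗ₜ[K] (antipode (R := K) c)) =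
      LinearMap.lTensor H (LinearMap.lTensor H (antipode (R := K)))
        ((TensorProduct.assoc K H H H) (z ⊗ₜ[K] c)) := by
  induction z using TensorProduct.induction_on with
  | zero => simp
  | tmul x y => simp
  | add x y hx hy => simp [TensorProduct.add_tmul, hx, hy]

lemma EF_comul (h : H) :
    LinearMap.lTensor H (LinearMap.mul' K H)
      ((TensorProduct.assoc K H H H)
        ((LinearMap.rTensor H (Coalgebra.comul (R := K)))
          ((LinearMap.lTensor H (antipode (R := K))) (Coalgebra.comul (R := K) h)))) =
      h ⊗ₜ[K] (1 : H) := by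
  have claimA : ∀ w : H ⊗[K] H,
      (TensorProduct.assoc K H H H)
        ((LinearMap.rTensor H (Coalgebra.comul (R := K)))
          ((LinearMap.lTensor H (antipode (R := K))) w)) =
      LinearMap.lTensor H (LinearMap.lTensor H (antipode (R := K)))
        ((TensorProduct.assoc K H H H)
          ((LinearMap.rTensor H (Coalgebra.comul (R := K))) w)) := by
    intro w
    induction w using TensorProduct.induction_on with
    | zero => simp
    | tmul a b =>
      simp only [LinearMap.lTensor_tmul, LinearMap.rTensor_tmul]
      exact assoc_lTensorS _ b
    | add x y hx hy => simp [hx, hy]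
  rw [claimA, Coalgebra.coassoc_apply, ← LinearMap.lTensor_comp_apply,
    ← LinearMap.lTensor_comp_apply, LinearMap.comp_assoc, mul_antipode_lTensor_comul]
  exact key0 h

lemma assoc_collapse_l (z : H ⊗[K] H) (c : H) :
    LinearMap.lTensor H (LinearMap.mul' K H) ((TensorProduct.assoc K H H H) (z ⊗ₜ[K] c)) =
      LinearMap.lTensor H (LinearMap.mulRight K c) z := by
  induction z using TensorProduct.induction_on with
  | zero => simp
  | tmul x y => simp
  | add x y hx hy => simp [TensorProduct.add_tmul, hx, hy]

lemma assoc_collapse_rS (z : H ⊗[K] H) (c : H) :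
    LinearMap.lTensor H (LinearMap.mul' K H ∘ₗ LinearMap.rTensor H (antipode (R := K)))
      ((TensorProduct.assoc K H H H) (z ⊗ₜ[K] c)) =
      LinearMap.lTensor H ((LinearMap.mulRight K c) ∘ₗ (antipode (R := K))) z := by
  induction z using TensorProduct.induction_on with
  | zero => simp
  | tmul x y => simp
  | add x y hx hy => simp [TensorProduct.add_tmul, hx, hy]


end HopfAux

section CatAux
open Coalgebra HopfAlgebra
set_option synthInstance.maxHeartbeats 400000
set_option maxHeartbeats 1000000

variable {K : Type} [Field K] {H : Type} [Ring H] [HopfAlgebra K H]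
variable {C : LeftHCat K H} (S : SmashCat C)

lemma aux_comp_idh_idh (X : C.Obj) (a b : H) :
    S.comp ((C.idm X) ⊗ₜ[K] a) ((C.idm X) ⊗ₜ[K] b) = (C.idm X) ⊗ₜ[K] (b * a) := by
  classical
  rw [S.comp_tmul]
  have r := ℛ K b
  rw [← r.eq, map_sum]
  have hterm : ∀ i, (TensorProduct.map
      (((C.comp (X := X) (Y := X) (Z := X)).flip (C.idm X)) ∘ₗ ((C.act X X).flip (C.idm X)))
      (LinearMap.mulRight K a)) (r.left i ⊗ₜ[K] r.right i) =
      (C.idm X) ⊗ₜ[K] (counit (R := K) (r.left i) • (r.right i * a)) := by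
    intro i
    rw [TensorProduct.map_tmul]
    simp only [LinearMap.comp_apply, LinearMap.flip_apply, LinearMap.mulRight_apply]
    rw [C.act_idm, map_smul, LinearMap.smul_apply, C.id_comp]
    rw [TensorProduct.smul_tmul]
  rw [Finset.sum_congr rfl fun i _ => hterm i, ← TensorProduct.tmul_sum]
  congr 1
  rw [show (∑ i ∈ r.index, counit (R := K) (r.left i) • (r.right i * a)) =
      (∑ i ∈ r.index, counit (R := K) (r.left i) • r.right i) * a from by
    rw [Finset.sum_mul]; exact Finset.sum_congr rfl fun i _ => (smul_mul_assoc _ _ _).symm]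
  rw [sum_counit_smul_right r]

lemma aux_comp_idh_f {X Y : C.Obj} (f : C.Hom X Y) (h : H) :
    S.comp ((C.idm X) ⊗ₜ[K] h) (f ⊗ₜ[K] (1 : H)) = f ⊗ₜ[K] h := by
  rw [S.comp_tmul, Bialgebra.comul_one, Algebra.TensorProduct.one_def, TensorProduct.map_tmul]
  simp only [LinearMap.comp_apply, LinearMap.flip_apply, LinearMap.mulRight_apply, one_mul]
  rw [C.act_one]
  simp only [LinearMap.id_apply]
  rw [C.id_comp]

lemma aux_actOn_apply (N : RMod K S.lin) (X : C.Obj) (h : H) (n : N.ob X) :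
    actOn S N X h n = N.map ((C.idm X) ⊗ₜ[K] (antipode (R := K) h)) n := rfl

lemma aux_map_idh (N : RMod K S.lin) (X : C.Obj) (a b : H) (n : N.ob X) :
    N.map ((C.idm X) ⊗ₜ[K] a) (N.map ((C.idm X) ⊗ₜ[K] b) n) =
      N.map ((C.idm X) ⊗ₜ[K] (b * a)) n := by
  have h3 : S.lin.comp ((C.idm X) ⊗ₜ[K] a) ((C.idm X) ⊗ₜ[K] b) =
      (C.idm X) ⊗ₜ[K] (b * a) := aux_comp_idh_idh S X a b
  rw [← h3, N.map_comp]
  rfl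

lemma aux_actOn_mul (N : RMod K S.lin) (X : C.Obj) (a b : H) (n : N.ob X) :
    actOn S N X a (actOn S N X b n) = actOn S N X (a * b) n := by
  rw [aux_actOn_apply, aux_actOn_apply, aux_actOn_apply, aux_map_idh, ← antipode_mul']

lemma aux_actOn_one (N : RMod K S.lin) (X : C.Obj) (n : N.ob X) :
    actOn S N X 1 n = n := by
  rw [aux_actOn_apply, antipode_one']
  exact LinearMap.congr_fun (N.map_id X) n

lemma aux_map_comp_idh {X Y : C.Obj} (P : RMod K S.lin) (f : C.Hom X Y) (h : H) (x : P.ob Y) :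
    P.map ((C.idm X) ⊗ₜ[K] h) (P.map (f ⊗ₜ[K] (1 : H)) x) = P.map (f ⊗ₜ[K] h) x := by
  have h3 : S.lin.comp ((C.idm X) ⊗ₜ[K] h) (f ⊗ₜ[K] (1 : H)) = f ⊗ₜ[K] h :=
    aux_comp_idh_f S f h
  rw [← h3, P.map_comp]
  rfl

/-- Evaluation at `X`, as a linear map on `C`-module morphisms. -/
def aux_appLin (N P : RMod K S.lin) (X : C.Obj) :
    (restrictOb S N ⟶ restrictOb S P) →ₗ[K] (N.ob X →ₗ[K] P.ob X) where
  toFun γ := γ.app X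
  map_add' _ _ := rfl
  map_smul' _ _ := rfl

end CatAux

section Aux9
open Coalgebra HopfAlgebra
set_option synthInstance.maxHeartbeats 400000
set_option maxHeartbeats 1000000

variable {K : Type} [Field K] {H : Type} [Ring H] [HopfAlgebra K H]
variable {C : LeftHCat K H} {S : SmashCat C}
variable {Sinv : H →ₗ[K] H}
variable {N : RMod K S.lin} {M : HLMod K H}
variable {mapT : ∀ X Y : C.Obj,
  (C.Hom X Y ⊗[K] H) →ₗ[K] ((M.V ⊗[K] N.ob Y) →ₗ[K] (M.V ⊗[K] N.ob X))}
variable {P : RMod K S.lin}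

lemma aux_mapT_one
    (hSinv₂ : ∀ h : H, Sinv (HopfAlgebra.antipode (R := K) h) = h)
    (hformT : ∀ (X Y : C.Obj) (f : C.Hom X Y) (h : H) (m : M.V) (n : N.ob Y),
      mapT X Y (f ⊗ₜ[K] h) (m ⊗ₜ[K] n) =
        TensorProduct.map ((M.act).flip m)
          ((actOn S N X).flip (N.map (f ⊗ₜ[K] (1 : H)) n))
          (Coalgebra.comul (R := K) (Sinv h)))
    {X Y : C.Obj} (f : C.Hom X Y) (m : M.V) (n : N.ob Y) :
    mapT X Y (f ⊗ₜ[K] (1 : H)) (m ⊗ₜ[K] n) = m ⊗ₜ[K] (N.map (f ⊗ₜ[K] (1 : H)) n) := by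
  rw [hformT X Y f 1 m n]
  have hs : Sinv (1 : H) = (1 : H) := by
    have := hSinv₂ 1
    rwa [antipode_one'] at this
  rw [hs, Bialgebra.comul_one, Algebra.TensorProduct.one_def, TensorProduct.map_tmul]
  congr 1
  · show M.act 1 m = m
    rw [M.act_one]; rfl
  · exact aux_actOn_one S N X _

/-- The morphism `n ↦ η (m ⊗ n)` of right `C`-modules. -/
def aux_gmap (hmod : IsRModMap K S.lin (fun X => M.V ⊗[K] N.ob X) mapT)
    (η : RMod.mk' K S.lin (fun X => M.V ⊗[K] N.ob X) mapT hmod ⟶ P)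
    (hSinv₂ : ∀ h : H, Sinv (HopfAlgebra.antipode (R := K) h) = h)
    (hformT : ∀ (X Y : C.Obj) (f : C.Hom X Y) (h : H) (m : M.V) (n : N.ob Y),
      mapT X Y (f ⊗ₜ[K] h) (m ⊗ₜ[K] n) =
        TensorProduct.map ((M.act).flip m)
          ((actOn S N X).flip (N.map (f ⊗ₜ[K] (1 : H)) n))
          (Coalgebra.comul (R := K) (Sinv h)))
    (m : M.V) : restrictOb S N ⟶ restrictOb S P where
  app X := (η.app X).comp ((TensorProduct.mk K M.V (N.ob X)) m)
  natural := by
    intro X Y f n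
    show η.app X (m ⊗ₜ[K] (N.map (f ⊗ₜ[K] (1 : H)) n)) =
      P.map (f ⊗ₜ[K] (1 : H)) (η.app Y (m ⊗ₜ[K] n))
    rw [← aux_mapT_one hSinv₂ hformT f m n]
    exact η.natural (f ⊗ₜ[K] (1 : H)) (m ⊗ₜ[K] n)

lemma aux_forward (hmod : IsRModMap K S.lin (fun X => M.V ⊗[K] N.ob X) mapT)
    (η : RMod.mk' K S.lin (fun X => M.V ⊗[K] N.ob X) mapT hmod ⟶ P)
    (hSinv₂ : ∀ h : H, Sinv (HopfAlgebra.antipode (R := K) h) = h)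
    (hformT : ∀ (X Y : C.Obj) (f : C.Hom X Y) (h : H) (m : M.V) (n : N.ob Y),
      mapT X Y (f ⊗ₜ[K] h) (m ⊗ₜ[K] n) =
        TensorProduct.map ((M.act).flip m)
          ((actOn S N X).flip (N.map (f ⊗ₜ[K] (1 : H)) n))
          (Coalgebra.comul (R := K) (Sinv h)))
    (m : M.V) (h : H) (X : C.Obj) (n : N.ob X) :
    adjRHS S (aux_gmap hmod η hSinv₂ hformT m) h X n = η.app X ((M.act h m) ⊗ₜ[K] n) := by
  set γ := aux_gmap hmod η hSinv₂ hformT m with hγdef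
  let Ψ : H ⊗[K] H →ₗ[K] M.V ⊗[K] N.ob X :=
    TensorProduct.map ((M.act).flip m) ((actOn S N X).flip n)
  let EFm : H ⊗[K] H →ₗ[K] H ⊗[K] H :=
    (LinearMap.lTensor H (LinearMap.mul' K H)) ∘ₗ
      (TensorProduct.assoc K H H H).toLinearMap ∘ₗ
      (LinearMap.rTensor H (Coalgebra.comul (R := K))) ∘ₗ
      (LinearMap.lTensor H (HopfAlgebra.antipode (R := K)))
  have hext : TensorProduct.lift
      (((LinearMap.llcomp (R := K) (R₂ := K) (R₃ := K) (M := H) (N := P.ob X) (P := P.ob X)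
        (σ₁₂ := RingHom.id K) (σ₂₃ := RingHom.id K) (σ₁₃ := RingHom.id K)).flip
        ((γ.app X) ∘ₗ (((actOn S N X) ∘ₗ (HopfAlgebra.antipode (R := K) (A := H))).flip n)))
        ∘ₗ (actOn S P X)) = ((η.app X) ∘ₗ Ψ) ∘ₗ EFm := by
    apply TensorProduct.ext'
    intro a b
    have hlhs : TensorProduct.lift
        (((LinearMap.llcomp (R := K) (R₂ := K) (R₃ := K) (M := H) (N := P.ob X) (P := P.ob X)
        (σ₁₂ := RingHom.id K) (σ₂₃ := RingHom.id K) (σ₁₃ := RingHom.id K)).flip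
          ((γ.app X) ∘ₗ (((actOn S N X) ∘ₗ (HopfAlgebra.antipode (R := K) (A := H))).flip n)))
          ∘ₗ (actOn S P X)) (a ⊗ₜ[K] b) =
        actOn S P X a (γ.app X (actOn S N X (HopfAlgebra.antipode (R := K) b) n)) := rfl
    rw [hlhs]
    have hγapp : ∀ x, γ.app X x = η.app X (m ⊗ₜ[K] x) := fun _ => rfl
    erw [hγapp, aux_actOn_apply S P X a,
      ← η.natural ((C.idm X) ⊗ₜ[K] (HopfAlgebra.antipode (R := K) a))
        (m ⊗ₜ[K] (actOn S N X (HopfAlgebra.antipode (R := K) b) n))]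
    show η.app X (mapT X X ((C.idm X) ⊗ₜ[K] (HopfAlgebra.antipode (R := K) a))
        (m ⊗ₜ[K] (actOn S N X (HopfAlgebra.antipode (R := K) b) n))) = _
    rw [hformT X X (C.idm X) (HopfAlgebra.antipode (R := K) a) m
        (actOn S N X (HopfAlgebra.antipode (R := K) b) n), hSinv₂ a]
    refine congrArg (η.app X) ?_
    have hid : N.map ((C.idm X) ⊗ₜ[K] (1 : H))
        (actOn S N X (HopfAlgebra.antipode (R := K) b) n) =
        actOn S N X (HopfAlgebra.antipode (R := K) b) n :=
      LinearMap.congr_fun (N.map_id X) _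
    rw [hid]
    have hEFm : EFm (a ⊗ₜ[K] b) =
        LinearMap.lTensor H (LinearMap.mulRight K (HopfAlgebra.antipode (R := K) b))
          (Coalgebra.comul (R := K) a) := by
      show (LinearMap.lTensor H (LinearMap.mul' K H))
          ((TensorProduct.assoc K H H H).toLinearMap
            ((LinearMap.rTensor H (Coalgebra.comul (R := K)))
              ((LinearMap.lTensor H (HopfAlgebra.antipode (R := K))) (a ⊗ₜ[K] b)))) = _
      rw [LinearMap.lTensor_tmul, LinearMap.rTensor_tmul]
      rw [show ((TensorProduct.assoc K H H H).toLinearMap :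
          (H ⊗[K] H) ⊗[K] H →ₗ[K] H ⊗[K] (H ⊗[K] H)) =
          ((TensorProduct.assoc K H H H : (H ⊗[K] H) ⊗[K] H ≃ₗ[K] H ⊗[K] (H ⊗[K] H)) :
            (H ⊗[K] H) ⊗[K] H →ₗ[K] H ⊗[K] (H ⊗[K] H)) from rfl]
      exact assoc_collapse_l _ _
    have hcomp : (actOn S N X).flip (actOn S N X (HopfAlgebra.antipode (R := K) b) n) =
        ((actOn S N X).flip n) ∘ₗ (LinearMap.mulRight K (HopfAlgebra.antipode (R := K) b)) := by
      apply LinearMap.ext; intro c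
      simp only [LinearMap.flip_apply, LinearMap.comp_apply, LinearMap.mulRight_apply]
      exact aux_actOn_mul S N X c _ n
    rw [hcomp]
    have hmapfac : TensorProduct.map ((M.act).flip m)
        (((actOn S N X).flip n) ∘ₗ (LinearMap.mulRight K (HopfAlgebra.antipode (R := K) b))) =
        Ψ ∘ₗ (LinearMap.lTensor H (LinearMap.mulRight K (HopfAlgebra.antipode (R := K) b))) := by
      rw [show ((M.act).flip m) = ((M.act).flip m) ∘ₗ LinearMap.id from (LinearMap.comp_id _).symm,
        TensorProduct.map_comp]
      rfl
    rw [hmapfac, hEFm]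
    rfl
  have hstart : adjRHS S γ h X n = TensorProduct.lift
      (((LinearMap.llcomp (R := K) (R₂ := K) (R₃ := K) (M := H) (N := P.ob X) (P := P.ob X)
        (σ₁₂ := RingHom.id K) (σ₂₃ := RingHom.id K) (σ₁₃ := RingHom.id K)).flip
        ((γ.app X) ∘ₗ (((actOn S N X) ∘ₗ (HopfAlgebra.antipode (R := K) (A := H))).flip n)))
        ∘ₗ (actOn S P X)) (Coalgebra.comul (R := K) h) := rfl
  rw [hstart, hext]
  have hEFh : EFm (Coalgebra.comul (R := K) h) = h ⊗ₜ[K] (1 : H) := by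
    show (LinearMap.lTensor H (LinearMap.mul' K H))
        ((TensorProduct.assoc K H H H).toLinearMap
          ((LinearMap.rTensor H (Coalgebra.comul (R := K)))
            ((LinearMap.lTensor H (HopfAlgebra.antipode (R := K)))
              (Coalgebra.comul (R := K) h)))) = _
    exact EF_comul h
  show η.app X (Ψ (EFm (Coalgebra.comul (R := K) h))) = _
  rw [hEFh]
  show η.app X ((M.act h m) ⊗ₜ[K] (actOn S N X 1 n)) = _
  rw [aux_actOn_one]

lemma aux_backward
    (hSinv₁ : ∀ h : H, HopfAlgebra.antipode (R := K) (Sinv h) = h)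
    (hformT : ∀ (X Y : C.Obj) (f : C.Hom X Y) (h : H) (m : M.V) (n : N.ob Y),
      mapT X Y (f ⊗ₜ[K] h) (m ⊗ₜ[K] n) =
        TensorProduct.map ((M.act).flip m)
          ((actOn S N X).flip (N.map (f ⊗ₜ[K] (1 : H)) n))
          (Coalgebra.comul (R := K) (Sinv h)))
    (actE : H →ₗ[K] (restrictOb S N ⟶ restrictOb S P) →ₗ[K]
      (restrictOb S N ⟶ restrictOb S P))
    (hformE : ∀ (h : H) (η : restrictOb S N ⟶ restrictOb S P)
      (X : C.Obj) (n : N.ob X), (actE h η).app X n = adjRHS S η h X n)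
    (G : M.V →ₗ[K] (restrictOb S N ⟶ restrictOb S P))
    (hG : ∀ (h : H) (m : M.V), G (M.act h m) = actE h (G m))
    {X Y : C.Obj} (f : C.Hom X Y) (h : H) (m : M.V) (n : N.ob Y) :
    TensorProduct.lift ((aux_appLin S N P X) ∘ₗ G) (mapT X Y (f ⊗ₜ[K] h) (m ⊗ₜ[K] n)) =
      P.map (f ⊗ₜ[K] h) ((G m).app Y n) := by
  rw [hformT X Y f h m n]
  set γ := G m with hγdef
  set n2 := N.map (f ⊗ₜ[K] (1 : H)) n with hn2
  let Ψ : H ⊗[K] H →ₗ[K] P.ob X :=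
    TensorProduct.lift
      (((LinearMap.llcomp (R := K) (R₂ := K) (R₃ := K) (M := H) (N := P.ob X) (P := P.ob X)
        (σ₁₂ := RingHom.id K) (σ₂₃ := RingHom.id K) (σ₁₃ := RingHom.id K)).flip
        ((γ.app X) ∘ₗ ((actOn S N X).flip n2))) ∘ₗ (actOn S P X))
  let EBm : H ⊗[K] H →ₗ[K] H ⊗[K] H :=
    (LinearMap.lTensor H ((LinearMap.mul' K H) ∘ₗ
        (LinearMap.rTensor H (HopfAlgebra.antipode (R := K))))) ∘ₗ
      (TensorProduct.assoc K H H H).toLinearMap ∘ₗ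
      (LinearMap.rTensor H (Coalgebra.comul (R := K)))
  have main : (TensorProduct.lift ((aux_appLin S N P X) ∘ₗ G)) ∘ₗ
      (TensorProduct.map ((M.act).flip m) ((actOn S N X).flip n2)) = Ψ ∘ₗ EBm := by
    apply TensorProduct.ext'
    intro a b
    have hlhs : ((TensorProduct.lift ((aux_appLin S N P X) ∘ₗ G)) ∘ₗ
        (TensorProduct.map ((M.act).flip m) ((actOn S N X).flip n2))) (a ⊗ₜ[K] b) =
        (G (M.act a m)).app X (actOn S N X b n2) := rfl
    rw [hlhs, hG a m, hformE a γ X (actOn S N X b n2)]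
    have hsub : TensorProduct.lift
        (((LinearMap.llcomp (R := K) (R₂ := K) (R₃ := K) (M := H) (N := P.ob X) (P := P.ob X)
        (σ₁₂ := RingHom.id K) (σ₂₃ := RingHom.id K) (σ₁₃ := RingHom.id K)).flip
          ((γ.app X) ∘ₗ (((actOn S N X) ∘ₗ (HopfAlgebra.antipode (R := K) (A := H))).flip
            (actOn S N X b n2)))) ∘ₗ (actOn S P X)) =
        Ψ ∘ₗ (LinearMap.lTensor H
          ((LinearMap.mulRight K b) ∘ₗ (HopfAlgebra.antipode (R := K)))) := by
      apply TensorProduct.ext'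
      intro u v
      show actOn S P X u (γ.app X (actOn S N X (HopfAlgebra.antipode (R := K) v)
          (actOn S N X b n2))) =
        actOn S P X u (γ.app X (actOn S N X
          ((HopfAlgebra.antipode (R := K) v) * b) n2))
      rw [aux_actOn_mul]
    have hstart : adjRHS S γ a X (actOn S N X b n2) = TensorProduct.lift
        (((LinearMap.llcomp (R := K) (R₂ := K) (R₃ := K) (M := H) (N := P.ob X) (P := P.ob X)
        (σ₁₂ := RingHom.id K) (σ₂₃ := RingHom.id K) (σ₁₃ := RingHom.id K)).flip
          ((γ.app X) ∘ₗ (((actOn S N X) ∘ₗ (HopfAlgebra.antipode (R := K) (A := H))).flip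
            (actOn S N X b n2)))) ∘ₗ (actOn S P X)) (Coalgebra.comul (R := K) a) := rfl
    rw [hstart, hsub]
    have hEBm : EBm (a ⊗ₜ[K] b) =
        LinearMap.lTensor H ((LinearMap.mulRight K b) ∘ₗ (HopfAlgebra.antipode (R := K)))
          (Coalgebra.comul (R := K) a) := by
      show (LinearMap.lTensor H ((LinearMap.mul' K H) ∘ₗ
          (LinearMap.rTensor H (HopfAlgebra.antipode (R := K)))))
          ((TensorProduct.assoc K H H H).toLinearMap
            ((LinearMap.rTensor H (Coalgebra.comul (R := K))) (a ⊗ₜ[K] b))) = _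
      rw [LinearMap.rTensor_tmul]
      exact assoc_collapse_rS _ _
    show Ψ (LinearMap.lTensor H ((LinearMap.mulRight K b) ∘ₗ
        (HopfAlgebra.antipode (R := K))) (Coalgebra.comul (R := K) a)) = Ψ (EBm (a ⊗ₜ[K] b))
    rw [hEBm]
  have happ := LinearMap.congr_fun main (Coalgebra.comul (R := K) (Sinv h))
  show (TensorProduct.lift ((aux_appLin S N P X) ∘ₗ G))
      ((TensorProduct.map ((M.act).flip m) ((actOn S N X).flip n2))
        (Coalgebra.comul (R := K) (Sinv h))) = _
  rw [show (TensorProduct.lift ((aux_appLin S N P X) ∘ₗ G))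
      ((TensorProduct.map ((M.act).flip m) ((actOn S N X).flip n2))
        (Coalgebra.comul (R := K) (Sinv h))) = Ψ (EBm (Coalgebra.comul (R := K) (Sinv h)))
    from happ]
  have hEBh : EBm (Coalgebra.comul (R := K) (Sinv h)) = (Sinv h) ⊗ₜ[K] (1 : H) := by
    show (LinearMap.lTensor H ((LinearMap.mul' K H) ∘ₗ
        (LinearMap.rTensor H (HopfAlgebra.antipode (R := K)))))
        ((TensorProduct.assoc K H H H).toLinearMap
          ((LinearMap.rTensor H (Coalgebra.comul (R := K)))
            (Coalgebra.comul (R := K) (Sinv h)))) = _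
    exact EB_comul (Sinv h)
  rw [hEBh]
  show actOn S P X (Sinv h) (γ.app X (actOn S N X 1 n2)) = _
  erw [aux_actOn_one, aux_actOn_apply, hSinv₁ h]
  have hnat : γ.app X n2 = P.map (f ⊗ₜ[K] (1 : H)) (γ.app Y n) := γ.natural f n
  erw [hnat, aux_map_comp_idh]

/-- The morphism `M ⊗ N ⟶ P` associated with an `H`-linear map `M → L(N,P)`. -/
def aux_eta (hmod : IsRModMap K S.lin (fun X => M.V ⊗[K] N.ob X) mapT)
    (hSinv₁ : ∀ h : H, HopfAlgebra.antipode (R := K) (Sinv h) = h)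
    (hformT : ∀ (X Y : C.Obj) (f : C.Hom X Y) (h : H) (m : M.V) (n : N.ob Y),
      mapT X Y (f ⊗ₜ[K] h) (m ⊗ₜ[K] n) =
        TensorProduct.map ((M.act).flip m)
          ((actOn S N X).flip (N.map (f ⊗ₜ[K] (1 : H)) n))
          (Coalgebra.comul (R := K) (Sinv h)))
    (actE : H →ₗ[K] (restrictOb S N ⟶ restrictOb S P) →ₗ[K]
      (restrictOb S N ⟶ restrictOb S P))
    (hformE : ∀ (h : H) (η : restrictOb S N ⟶ restrictOb S P)
      (X : C.Obj) (n : N.ob X), (actE h η).app X n = adjRHS S η h X n)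
    (G : M.V →ₗ[K] (restrictOb S N ⟶ restrictOb S P))
    (hG : ∀ (h : H) (m : M.V), G (M.act h m) = actE h (G m)) :
    RMod.mk' K S.lin (fun X => M.V ⊗[K] N.ob X) mapT hmod ⟶ P where
  app X := TensorProduct.lift ((aux_appLin S N P X) ∘ₗ G)
  natural := by
    intro X Y φ v
    show TensorProduct.lift ((aux_appLin S N P X) ∘ₗ G) (mapT X Y φ v) =
      P.map φ (TensorProduct.lift ((aux_appLin S N P Y) ∘ₗ G) v)
    induction φ using TensorProduct.induction_on with
    | zero =>
      simp only [map_zero, LinearMap.zero_apply]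
      exact map_zero _
    | tmul f h =>
      induction v using TensorProduct.induction_on with
      | zero => simp
      | tmul m n =>
        have := aux_backward hSinv₁ hformT actE hformE G hG f h m n
        rw [this]
        rfl
      | add v₁ v₂ h₁ h₂ => simp only [map_add, h₁, h₂]
    | add φ₁ φ₂ h₁ h₂ =>
      simp only [map_add, LinearMap.add_apply, h₁, h₂]
      erw [LinearMap.add_apply, map_add, h₁, h₂]

end Aux9
section Statement9
variable {K : Type} [Field K] {H : Type} [Ring H] [HopfAlgebra K H]

/-- **Statement 9.** Let `C` be a left `H`-category and `N` a right `C#H`-module.  The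
functor `L_{Mod-C}(N,-) = Hom_{Mod-C}(N,-)^{(H)} : Mod-(C#H) → H-mod` is right adjoint
to `(-) ⊗ N : H-mod → Mod-(C#H)`: for every right `C#H`-module `P` and every locally
finite left `H`-module `M` there is a (natural) bijection
`Hom_{Mod-(C#H)}(M ⊗ N, P) ≅ Hom_{H-mod}(M, L_{Mod-C}(N,P))`. -/
theorem statement9 (C : LeftHCat K H) (S : SmashCat C)
    (Sinv : H →ₗ[K] H)
    (hSinv₁ : ∀ h : H, HopfAlgebra.antipode (R := K) (Sinv h) = h)
    (hSinv₂ : ∀ h : H, Sinv (HopfAlgebra.antipode (R := K) h) = h)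
    (N : RMod K S.lin) (M : HLMod K H) (hM : M.IsLocFin)
    -- the `C#H`-module `M ⊗ N` (with diagonal `H`-action)
    (mapT : ∀ X Y : C.Obj,
      (C.Hom X Y ⊗[K] H) →ₗ[K] ((M.V ⊗[K] N.ob Y) →ₗ[K] (M.V ⊗[K] N.ob X)))
    (hmod : IsRModMap K S.lin (fun X => M.V ⊗[K] N.ob X) mapT)
    (hformT : ∀ (X Y : C.Obj) (f : C.Hom X Y) (h : H) (m : M.V) (n : N.ob Y),
      mapT X Y (f ⊗ₜ[K] h) (m ⊗ₜ[K] n) =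
        TensorProduct.map ((M.act).flip m)
          ((actOn S N X).flip (N.map (f ⊗ₜ[K] (1 : H)) n))
          (Coalgebra.comul (R := K) (Sinv h)))
    (P : RMod K S.lin)
    -- the adjoint `H`-action on `Hom_{Mod-C}(N, P)`
    (actE : H →ₗ[K] (restrictOb S N ⟶ restrictOb S P) →ₗ[K]
      (restrictOb S N ⟶ restrictOb S P))
    (h1 : actE 1 = LinearMap.id)
    (h2 : ∀ a b : H, actE (a * b) = (actE a) ∘ₗ (actE b))
    (hformE : ∀ (h : H) (η : restrictOb S N ⟶ restrictOb S P)
      (X : C.Obj) (n : N.ob X), (actE h η).app X n = adjRHS S η h X n) :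
    ∃ φ : (RMod.mk' K S.lin (fun X => M.V ⊗[K] N.ob X) mapT hmod ⟶ P) ≃
        {g : M.V →ₗ[K]
            ↥((HLMod.mk (K := K) (H := H)
                (V := (restrictOb S N ⟶ restrictOb S P)) actE h1 h2).locFin) //
          ∀ (h : H) (m : M.V),
            g (M.act h m) =
              (HLMod.mk (K := K) (H := H)
                (V := (restrictOb S N ⟶ restrictOb S P)) actE h1 h2).locFinMod.act h
                (g m)},
      ∀ (η : RMod.mk' K S.lin (fun X => M.V ⊗[K] N.ob X) mapT hmod ⟶ P)
        (m : M.V) (X : C.Obj) (n : N.ob X),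
        (((φ η).val m).val).app X n = η.app X (m ⊗ₜ[K] n) := by
  classical
  set W : HLMod K H := HLMod.mk (K := K) (H := H)
    (V := (restrictOb S N ⟶ restrictOb S P)) actE h1 h2 with hW
  -- the linear map `m ↦ (n ↦ η (m ⊗ n))`
  let gm : (RMod.mk' K S.lin (fun X => M.V ⊗[K] N.ob X) mapT hmod ⟶ P) →
      M.V →ₗ[K] (restrictOb S N ⟶ restrictOb S P) := fun η =>
    { toFun := fun m => aux_gmap hmod η hSinv₂ hformT m
      map_add' := by
        intro m m'
        apply RModHom.app_injective
        funext X
        apply LinearMap.ext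
        refine fun (n : N.ob X) => ?_
        show η.app X ((m + m') ⊗ₜ[K] n) = _
        erw [TensorProduct.add_tmul, map_add]
        rfl
      map_smul' := by
        intro c m
        apply RModHom.app_injective
        funext X
        apply LinearMap.ext
        refine fun (n : N.ob X) => ?_
        show η.app X ((c • m) ⊗ₜ[K] n) = _
        erw [← TensorProduct.smul_tmul', map_smul]
        rfl }
  have equivar : ∀ (η : RMod.mk' K S.lin (fun X => M.V ⊗[K] N.ob X) mapT hmod ⟶ P)
      (h : H) (m : M.V), gm η (M.act h m) = actE h (gm η m) := by
    intro η h m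
    apply RModHom.app_injective
    funext X
    apply LinearMap.ext
    intro n
    show η.app X ((M.act h m) ⊗ₜ[K] n) = (actE h (gm η m)).app X n
    rw [hformE h (gm η m) X n]
    exact (aux_forward hmod η hSinv₂ hformT m h X n).symm
  have mem : ∀ (η : RMod.mk' K S.lin (fun X => M.V ⊗[K] N.ob X) mapT hmod ⟶ P)
      (m : M.V), gm η m ∈ W.locFin := by
    intro η m
    show W.LocFinElt (gm η m)
    unfold HLMod.LocFinElt
    have hfun : (fun h : H => W.act h (gm η m)) = (gm η) ∘ (fun h : H => M.act h m) := by
      funext h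
      show actE h (gm η m) = gm η (M.act h m)
      exact (equivar η h m).symm
    rw [hfun, Set.range_comp, Submodule.span_image]
    haveI : FiniteDimensional K
        (Submodule.span K (Set.range fun h : H => M.act h m)) := hM m
    exact Module.Finite.map _ _
  have hGval : ∀ (g : {g : M.V →ₗ[K] ↥W.locFin //
      ∀ (h : H) (m : M.V), g (M.act h m) = W.locFinMod.act h (g m)})
      (h : H) (m : M.V),
      (W.locFin.subtype ∘ₗ g.val) (M.act h m) = actE h ((W.locFin.subtype ∘ₗ g.val) m) := by
    intro g h m
    have := congrArg Subtype.val (g.2 h m)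
    exact this
  refine ⟨{
    toFun := fun η => ⟨LinearMap.codRestrict W.locFin (gm η) (mem η), by
      intro h m
      apply Subtype.ext
      exact equivar η h m⟩
    invFun := fun g => aux_eta hmod hSinv₁ hformT actE hformE
      (W.locFin.subtype ∘ₗ g.val) (hGval g)
    left_inv := by
      intro η
      apply RModHom.app_injective
      funext X
      exact TensorProduct.ext' fun m n => rfl
    right_inv := by
      intro g
      apply Subtype.ext
      apply LinearMap.ext
      intro m
      apply Subtype.ext
      apply RModHom.app_injective
      funext X
      apply LinearMap.ext
      intro n
      rfl }, ?_⟩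
  intro η m X n
  rfl


end Statement9

end
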